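/- For all n ≥ 0, 0 ≤ 2k ≤ n, 1 ≤ j ≤ dim H_{n-2k}^d and every ξ ∈ S^{d-1}, the orthonormal basis polynomial f_{k,j}^n satisfies f_{k,j}^n(ξ) = H_n · Y_{j,n-2k}(ξ), where H_n = √((n+d/2)/(d/2)); in particular the constant H_n is independent of k and j. -/

import Mathlib

open MeasureTheory Real Finset Filter Topology RealInnerProductSpace

noncomputable section

/-- `ℝ^d` with the Euclidean structure. -/
abbrev Esp (d : ℕ) := EuclideanSpace ℝ (Fin d)

/-- The Radon transform `R f(ξ, t)`: integral of `f` over the hyperplane `⟨ξ, x⟩ = t`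
intersected with the closed unit ball `B^d` (for `f` supported in `B^d` this is the integral
over the whole hyperplane). -/
def radon {d : ℕ} (f : Esp d → ℝ) (ξ : Esp d) (t : ℝ) : ℝ :=
  ∫ y in {y : ((ℝ ∙ ξ)ᗮ : Submodule ℝ (Esp d)) |
      t • ξ + (y : Esp d) ∈ Metric.closedBall (0 : Esp d) 1},
    f (t • ξ + (y : Esp d))

/-- The surface measure `dω` on the unit sphere `S^{d-1}`. -/
def sphereMeasure (d : ℕ) : Measure (Metric.sphere (0 : Esp d) 1) :=
  (volume : Measure (Esp d)).toSphere

/-- `σ_d = 2 π^{d/2} / Γ(d/2)`, the surface area of `S^{d-1}`. -/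
def sigmaConst (d : ℕ) : ℝ := 2 * Real.pi ^ ((d : ℝ) / 2) / Real.Gamma ((d : ℝ) / 2)

/-- `b_d = π^{d/2} / Γ((d+2)/2)`, the volume of the unit ball `B^d`. -/
def ballVol (d : ℕ) : ℝ := Real.pi ^ ((d : ℝ) / 2) / Real.Gamma (((d : ℝ) + 2) / 2)

/-- `c_λ = Γ(1/2) Γ(λ+1/2) / Γ(λ+1)`, normalization constant of `(1-t²)^{λ-1/2}` on `[-1,1]`. -/
def cConst (lam : ℝ) : ℝ := Real.Gamma (1 / 2) * Real.Gamma (lam + 1 / 2) / Real.Gamma (lam + 1)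

/-- Pochhammer symbol `(a)_k = a (a+1) ⋯ (a+k-1)`. -/
def poch (a : ℝ) (k : ℕ) : ℝ := ∏ i ∈ Finset.range k, (a + i)

/-- The Gegenbauer polynomial `C_n^λ(t)`, normalized by
`c_λ ∫_{-1}^1 C_k^λ C_l^λ (1-t²)^{λ-1/2} dt = (λ (2λ)_k / ((k+λ) k!)) δ_{k,l}`. -/
def gegen (lam : ℝ) (n : ℕ) (t : ℝ) : ℝ :=
  ∑ k ∈ Finset.range (n / 2 + 1),
    (-1 : ℝ) ^ k * Real.Gamma ((n : ℝ) - k + lam) /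
      (Real.Gamma lam * (Nat.factorial k) * (Nat.factorial (n - 2 * k))) * (2 * t) ^ (n - 2 * k)

/-- `h_n^{(λ)} = λ (2λ)_n / ((n+λ) n!)`, the square of the norm of `C_n^λ`. -/
def hGegen (lam : ℝ) (n : ℕ) : ℝ := lam * poch (2 * lam) n / (((n : ℝ) + lam) * n.factorial)

/-- The kernel `Φ_n(t,u) = Σ_{k=0}^n ((k+d/2)/(d/2)) C_k^{d/2}(t) C_k^{d/2}(u)`. -/
def Phi (d n : ℕ) (t u : ℝ) : ℝ :=
  ∑ k ∈ Finset.range (n + 1),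
    (((k : ℝ) + (d : ℝ) / 2) / ((d : ℝ) / 2)) * gegen ((d : ℝ) / 2) k t * gegen ((d : ℝ) / 2) k u

/-- The Jacobi polynomial `P_n^{(a,b)}`. -/
def jacobiP (a b : ℝ) (n : ℕ) (x : ℝ) : ℝ :=
  ∑ s ∈ Finset.range (n + 1),
    (Real.Gamma (a + n + 1) / (Real.Gamma (a + s + 1) * Nat.factorial (n - s))) *
      (Real.Gamma (b + n + 1) / (Real.Gamma (b + (n : ℝ) - s + 1) * Nat.factorial s)) *
      ((x - 1) / 2) ^ s * ((x + 1) / 2) ^ (n - s)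

/-- `h_k^{(a,b)}`, the square of the norm of `P_k^{(a,b)}` for the normalized Jacobi weight. -/
def hJacobi (a b : ℝ) (k : ℕ) : ℝ :=
  poch (a + 1) k * poch (b + 1) k * (a + b + k + 1) /
    (k.factorial * poch (a + b + 2) k * (a + b + 2 * k + 1))

/-- The orthonormal Jacobi polynomial `p_k^{(a,b)} = [h_k^{(a,b)}]^{-1/2} P_k^{(a,b)}`. -/
def jacobiOrtho (a b : ℝ) (k : ℕ) (x : ℝ) : ℝ := jacobiP a b k x / Real.sqrt (hJacobi a b k)

/-- The constant `h_{n,k}` with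
`h_{n,k}² = Γ((d+2)/2) Γ(n-2k+d/2) / (Γ(d/2) Γ(n-2k+(d+2)/2))`. -/
def hnk (d n k : ℕ) : ℝ :=
  Real.sqrt (Real.Gamma (((d : ℝ) + 2) / 2) * Real.Gamma ((n : ℝ) - 2 * k + (d : ℝ) / 2) /
    (Real.Gamma ((d : ℝ) / 2) * Real.Gamma ((n : ℝ) - 2 * k + ((d : ℝ) + 2) / 2)))

/-- The orthonormal basis element
`f_{k,j}^n(x) = h_{n,k}^{-1} p_k^{(0, n-2k+(d-2)/2)}(2‖x‖²-1) Y(x)` of `V_n^d`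
(for the Lebesgue measure, i.e. `μ = 1/2`), built from a spherical harmonic `Y` of
degree `n - 2k`. -/
def fkjBasis (d n k : ℕ) (Y : Esp d → ℝ) (x : Esp d) : ℝ :=
  (hnk d n k)⁻¹ * jacobiOrtho 0 ((n : ℝ) - 2 * k + ((d : ℝ) - 2) / 2) k (2 * ‖x‖ ^ 2 - 1) * Y x

/-- `g_{k,j}^n(ξ,t) = [h_n^{(d/2)}]^{-1/2} (1-t²)^{(d-1)/2} C_n^{d/2}(t) Y(ξ)`,
built from a spherical harmonic `Y` of degree `n - 2k`. -/
def gkjBasis (d n : ℕ) (Y : Esp d → ℝ) (ξ : Esp d) (t : ℝ) : ℝ :=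
  (Real.sqrt (hGegen ((d : ℝ) / 2) n))⁻¹ * (1 - t ^ 2) ^ (((d : ℝ) - 1) / 2) *
    gegen ((d : ℝ) / 2) n t * Y ξ

/-- `P : ℝ^d → ℝ` is (the evaluation of) a polynomial of total degree at most `n`. -/
def IsPolyDeg (d n : ℕ) (P : Esp d → ℝ) : Prop :=
  ∃ p : MvPolynomial (Fin d) ℝ, p.totalDegree ≤ n ∧
    ∀ x : Esp d, P x = MvPolynomial.eval (fun i => x i) p

/-- `P ∈ V_n^d`: `P` is a polynomial of degree at most `n` which is orthogonal, in
`L²(B^d, dx)`, to all polynomials of total degree `< n`. -/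
def MemV (d n : ℕ) (P : Esp d → ℝ) : Prop :=
  IsPolyDeg d n P ∧
    ∀ Q : Esp d → ℝ,
      (∃ q : MvPolynomial (Fin d) ℝ, q.totalDegree < n ∧
          ∀ x : Esp d, Q x = MvPolynomial.eval (fun i => x i) q) →
      ∫ x in Metric.closedBall (0 : Esp d) 1, P x * Q x = 0

/-- `p = proj_n f`, the orthogonal projection of `f` onto `V_n^d` in
`L²(B^d, b_d^{-1} dx)`: `p ∈ V_n^d` and `f - p ⟂ V_n^d`. -/
def IsProjOn (d n : ℕ) (f p : Esp d → ℝ) : Prop :=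
  MemV d n p ∧ ∀ Q : Esp d → ℝ, MemV d n Q →
    ∫ x in Metric.closedBall (0 : Esp d) 1, (f x - p x) * Q x = 0

/-- `P` is harmonic: its Laplacian vanishes identically. -/
def IsHarmonicFn {d : ℕ} (P : Esp d → ℝ) : Prop :=
  ∀ x : Esp d, ∑ i : Fin d,
    iteratedFDeriv ℝ 2 P x ![EuclideanSpace.single i 1, EuclideanSpace.single i 1] = 0

/-- `P` is homogeneous of degree `m`. -/
def IsHomogeneousDeg {d : ℕ} (m : ℕ) (P : Esp d → ℝ) : Prop :=
  ∀ (c : ℝ) (x : Esp d), P (c • x) = c ^ m * P x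

/-- `Y` is a (solid) spherical harmonic of degree `m`: a harmonic homogeneous
polynomial of degree `m`. -/
def IsSphHarm (d m : ℕ) (Y : Esp d → ℝ) : Prop :=
  IsPolyDeg d m Y ∧ IsHomogeneousDeg m Y ∧ IsHarmonicFn Y

/-- The inner product of `L²(Z, w^{1-d})`, `Z = S^{d-1} × [-1,1]`:
`⟨F,G⟩ = c_{d/2} ∫_{-1}^1 σ_d^{-1} ∫_{S^{d-1}} F(ξ,t) G(ξ,t) dω(ξ) (1-t²)^{(1-d)/2} dt`. -/
def innerZ (d : ℕ) (F G : Esp d → ℝ → ℝ) : ℝ :=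
  cConst ((d : ℝ) / 2) * ∫ t in (-1 : ℝ)..1,
    ((sigmaConst d)⁻¹ * ∫ ξ : Metric.sphere (0 : Esp d) 1, F ξ t * G ξ t ∂(sphereMeasure d)) *
      (1 - t ^ 2) ^ ((1 - (d : ℝ)) / 2)

/-- The inner product of `L²(B^d, b_d^{-1} dx)`. -/
def innerB (d : ℕ) (f g : Esp d → ℝ) : ℝ :=
  (ballVol d)⁻¹ * ∫ x in Metric.closedBall (0 : Esp d) 1, f x * g x

/-- The singular values `γ_n = b_{d-1} √(n!/(d)_n)` of the Radon transform. -/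
def svGamma (d n : ℕ) : ℝ := ballVol (d - 1) * Real.sqrt (n.factorial / poch (d : ℝ) n)


/-- The Chebyshev polynomial of the second kind `U_k`. -/
def chebU (k : ℕ) (t : ℝ) : ℝ := (Polynomial.Chebyshev.U ℝ (k : ℤ)).eval t

/-- The kernel `Φ_n(t,u) = Σ_{k=0}^n (k+1) U_k(t) U_k(u)` (the case `d = 2` of `Φ_n`). -/
def PhiU (n : ℕ) (t u : ℝ) : ℝ :=
  ∑ k ∈ Finset.range (n + 1), ((k : ℝ) + 1) * chebU k t * chebU k u

/-- The point `(cos θ, sin θ)` on the unit circle `S¹ ⊆ ℝ²`. -/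
def circlePt (θ : ℝ) : Esp 2 := (WithLp.equiv 2 (Fin 2 → ℝ)).symm ![Real.cos θ, Real.sin θ]

end

/-!
On the sphere the radial variable `2‖ξ‖² - 1` equals `1`, where `P_k^{(0,b)}(1) = 1`, so
`f_{k,j}^n(ξ)` is `Y(ξ)` times the two normalising constants `h_{n,k}⁻¹` and
`[h_k^{(0,b)}]^{-1/2}` with `b = n - 2k + (d-2)/2`. By `Γ(s+1) = s Γ(s)` they are
`√((n-2k+d/2)/(d/2))` and `√((n+d/2)/(n-2k+d/2))`, and the factor depending on `k` cancels.
-/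

lemma poch_succ (a : ℝ) (k : ℕ) : poch a (k + 1) = poch a k * (a + k) :=
  Finset.prod_range_succ _ k

lemma poch_succ' (a : ℝ) (k : ℕ) : poch a (k + 1) = a * poch (a + 1) k := by
  rw [poch, Finset.prod_range_succ', poch, mul_comm]
  congr 1
  · simp
  · exact Finset.prod_congr rfl fun i _ => by push_cast; ring

lemma poch_one (k : ℕ) : poch 1 k = k.factorial := by
  rw [← Finset.prod_range_add_one_eq_factorial k, poch]
  push_cast
  exact Finset.prod_congr rfl fun i _ => add_comm _ _

lemma poch_pos {a : ℝ} (ha : 0 < a) (k : ℕ) : 0 < poch a k :=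
  Finset.prod_pos fun _ _ => by positivity

lemma jacobiP_one (a b : ℝ) (n : ℕ) (hb : Real.Gamma (b + n + 1) ≠ 0) :
    jacobiP a b n 1 = Real.Gamma (a + n + 1) / (Real.Gamma (a + 1) * n.factorial) := by
  rw [jacobiP, Finset.sum_eq_single 0]
  · simp [hb]
  · intro s _ hs
    simp [zero_pow hs]
  · simp

lemma jacobiP_zero_one (b : ℝ) (n : ℕ) (hb : Real.Gamma (b + n + 1) ≠ 0) :
    jacobiP 0 b n 1 = 1 := by
  rw [jacobiP_one 0 b n hb, zero_add, zero_add, Real.Gamma_one, one_mul,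
    Real.Gamma_nat_eq_factorial, div_self (by positivity)]

lemma hJacobi_zero {b : ℝ} (hb : -1 < b) (k : ℕ) :
    hJacobi 0 b k = (b + 1) / (b + 2 * k + 1) := by
  have hpoch : poch (b + 1) k * (b + 1 + k) = (b + 1) * poch (b + 2) k := by
    rw [← poch_succ, poch_succ', show b + 1 + 1 = b + 2 by ring]
  have hpos : 0 < poch (b + 2) k := poch_pos (by linarith) k
  have hden : b + 2 * k + 1 ≠ 0 := by have := k.cast_nonneg (α := ℝ); linarith
  simp only [hJacobi, zero_add, poch_one]
  rw [add_right_comm b, mul_assoc _ (poch _ _), hpoch]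
  field_simp

lemma jacobiOrtho_zero_one {b : ℝ} (hb : -1 < b) (k : ℕ) :
    jacobiOrtho 0 b k 1 = Real.sqrt ((b + 2 * k + 1) / (b + 1)) := by
  have hΓ : Real.Gamma (b + k + 1) ≠ 0 := by
    have := k.cast_nonneg (α := ℝ)
    exact (Real.Gamma_pos_of_pos (by linarith)).ne'
  rw [jacobiOrtho, jacobiP_zero_one b k hΓ, hJacobi_zero hb, one_div, ← Real.sqrt_inv, inv_div]

lemma Gamma_add_one_mul_div {a c : ℝ} (ha : 0 < a) (hc : 0 < c) :
    Real.Gamma (a + 1) * Real.Gamma c / (Real.Gamma a * Real.Gamma (c + 1)) = a / c := by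
  have hΓa := (Real.Gamma_pos_of_pos ha).ne'
  have hΓc := (Real.Gamma_pos_of_pos hc).ne'
  rw [Real.Gamma_add_one ha.ne', Real.Gamma_add_one hc.ne']
  field_simp

lemma sub_two_mul_add_half_pos {d n k : ℕ} (hd : 1 ≤ d) (hk : 2 * k ≤ n) :
    (0 : ℝ) < n - 2 * k + d / 2 := by
  have : (2 * k : ℝ) ≤ n := by exact_mod_cast hk
  have : (1 : ℝ) ≤ d := by exact_mod_cast hd
  linarith

lemma hnk_eq {d n k : ℕ} (hd : 1 ≤ d) (hk : 2 * k ≤ n) :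
    hnk d n k = Real.sqrt ((d / 2) / (n - 2 * k + d / 2)) := by
  have hc := sub_two_mul_add_half_pos hd hk
  rw [hnk, show ((d : ℝ) + 2) / 2 = d / 2 + 1 by ring, ← add_assoc ((n : ℝ) - 2 * k),
    Gamma_add_one_mul_div (by positivity) hc]

lemma inv_sqrt_div_mul_sqrt_div {a b c : ℝ} (ha : 0 < a) (hc : 0 < c) :
    (Real.sqrt (a / c))⁻¹ * Real.sqrt (b / c) = Real.sqrt (b / a) := by
  rw [← Real.sqrt_inv, ← Real.sqrt_mul (by positivity)]
  congr 1
  field_simp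

theorem fkj_on_sphere_general (d n k : ℕ) (hd : 1 ≤ d) (hk : 2 * k ≤ n)
    (Y : Esp d → ℝ)
    (ξ : Esp d) (hξ : ‖ξ‖ = 1) :
    fkjBasis d n k Y ξ = Real.sqrt (((n : ℝ) + (d : ℝ) / 2) / ((d : ℝ) / 2)) * Y ξ := by
  have hc := sub_two_mul_add_half_pos hd hk
  have hb : (-1 : ℝ) < n - 2 * k + (d - 2) / 2 := by linarith
  rw [fkjBasis, hξ, show (2 : ℝ) * 1 ^ 2 - 1 = 1 by norm_num, jacobiOrtho_zero_one hb,
    hnk_eq hd hk, show (n - 2 * k + (d - 2) / 2 : ℝ) + 1 = n - 2 * k + d / 2 by ring,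
    show (n - 2 * k + (d - 2) / 2 : ℝ) + 2 * k + 1 = n + d / 2 by ring,
    inv_sqrt_div_mul_sqrt_div (by positivity) hc]

/-- For `0 ≤ 2k ≤ n` and a spherical harmonic `Y` of degree `n - 2k`
(member of an orthonormal basis of `H_{n-2k}^d`), the orthonormal basis polynomial
`f_{k,j}^n` satisfies, for every `ξ ∈ S^{d-1}`,
`f_{k,j}^n(ξ) = H_n · Y(ξ)` with `H_n = √((n+d/2)/(d/2))` independent of `k` and `j`. -/
theorem fkj_on_sphere (d n k : ℕ) (hd : 1 ≤ d) (hk : 2 * k ≤ n)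
    (Y : Esp d → ℝ) (hY : IsSphHarm d (n - 2 * k) Y)
    (hYnorm : (sigmaConst d)⁻¹ *
        (∫ ξ : Metric.sphere (0 : Esp d) 1, Y (ξ : Esp d) * Y (ξ : Esp d) ∂(sphereMeasure d)) = 1)
    (ξ : Esp d) (hξ : ‖ξ‖ = 1) :
    fkjBasis d n k Y ξ = Real.sqrt (((n : ℝ) + (d : ℝ) / 2) / ((d : ℝ) / 2)) * Y ξ :=
  fkj_on_sphere_general d n k hd hk Y ξ hξ
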